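/- arXiv:2201.01036 — 3 statements merged into one kernel-verified Lean document; each statement's English description precedes it below -/
import Mathlib

section
/- Let g : ℝ^d → ℝ be convex and differentiable with l-Lipschitz gradient, let L > l, and let Θ ⊆ ℝ^d be nonempty. Suppose θ_{m+1} minimizes over Θ the function θ ↦ ‖θ - (θ_m - (1/L)∇g(θ_m))‖₂². Then g(θ_m) - g(θ_{m+1}) ≥ ((L - l)/2)‖θ_m - θ_{m+1}‖₂². -/
/-! The projection property of `θm1`, compared against the feasible point `θm`, forces
`⟪∇g θm, θm1 - θm⟫ ≤ -(L/2) ‖θm1 - θm‖²`. The quadratic upper bound coming from the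
`l`-Lipschitz gradient then gives `g θm1 ≤ g θm - ((L - l)/2) ‖θm1 - θm‖²`. -/

open InnerProductSpace

section

variable {F : Type*} [NormedAddCommGroup F] [InnerProductSpace ℝ F]

theorem hasDerivAt_apply_add_smul [CompleteSpace F] {f : F → ℝ} {x v : F} {t : ℝ}
    (hf : DifferentiableAt ℝ f (x + t • v)) :
    HasDerivAt (fun s : ℝ => f (x + s • v)) ⟪gradient f (x + t • v), v⟫_ℝ t := by
  have hline : HasDerivAt (fun s : ℝ => x + s • v) v t := by
    simpa using ((hasDerivAt_id t).smul_const v).const_add x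
  rw [inner_gradient_left]
  exact hf.hasFDerivAt.comp_hasDerivAt t hline

theorem le_add_inner_gradient_add_sq_of_lipschitz_gradient [CompleteSpace F] {f : F → ℝ} {l : ℝ}
    (hf : Differentiable ℝ f) (hlip : ∀ x y, ‖gradient f x - gradient f y‖ ≤ l * ‖x - y‖)
    (x y : F) :
    f y ≤ f x + ⟪gradient f x, y - x⟫_ℝ + l / 2 * ‖y - x‖ ^ 2 := by
  set v := y - x
  have hderiv_le (t : ℝ) (ht : 0 ≤ t) :
      ⟪gradient f (x + t • v), v⟫_ℝ ≤ ⟪gradient f x, v⟫_ℝ + l * t * ‖v‖ ^ 2 := by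
    have := calc ⟪gradient f (x + t • v) - gradient f x, v⟫_ℝ
        ≤ ‖gradient f (x + t • v) - gradient f x‖ * ‖v‖ := real_inner_le_norm _ _
      _ ≤ l * ‖x + t • v - x‖ * ‖v‖ := by gcongr; exact hlip _ _
      _ = l * t * ‖v‖ ^ 2 := by
        rw [add_sub_cancel_left, norm_smul, Real.norm_of_nonneg ht]; ring
    rw [inner_sub_left] at this
    linarith
  have hB (t : ℝ) : HasDerivAt (fun s : ℝ => f x + s * ⟪gradient f x, v⟫_ℝ + l / 2 * s ^ 2 * ‖v‖ ^ 2)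
      (⟪gradient f x, v⟫_ℝ + l * t * ‖v‖ ^ 2) t := by
    have hsq : HasDerivAt (fun s : ℝ => s ^ 2) (2 * t) t := by simpa using hasDerivAt_pow 2 t
    exact ((((hasDerivAt_id t).mul_const _).const_add (f x)).add
      ((hsq.const_mul (l / 2)).mul_const (‖v‖ ^ 2))).congr_deriv (by ring)
  have key := image_le_of_deriv_right_le_deriv_boundary
    (fun t _ => (hasDerivAt_apply_add_smul (hf _)).continuousAt.continuousWithinAt)
    (fun t _ => (hasDerivAt_apply_add_smul (hf _)).hasDerivWithinAt)
    (by simp) (fun t _ => (hB t).continuousAt.continuousWithinAt)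
    (fun t _ => (hB t).hasDerivWithinAt) (fun t ht => hderiv_le t ht.1)
    (Set.right_mem_Icc.2 zero_le_one)
  simpa [v] using key

theorem inner_sub_le_of_norm_sub_gradient_step_le {L : ℝ} (hL : 0 < L) {x y G : F}
    (h : ‖y - (x - (1 / L) • G)‖ ^ 2 ≤ ‖x - (x - (1 / L) • G)‖ ^ 2) :
    ⟪G, y - x⟫_ℝ ≤ -(L / 2) * ‖y - x‖ ^ 2 := by
  rw [show y - (x - (1 / L) • G) = (y - x) + (1 / L) • G by abel, sub_sub_cancel,
    norm_add_sq_real, real_inner_smul_right, real_inner_comm] at h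
  have hnonpos : ‖y - x‖ ^ 2 + 2 * (1 / L * ⟪G, y - x⟫_ℝ) ≤ 0 := by linarith
  have hscale : L / 2 * (‖y - x‖ ^ 2 + 2 * (1 / L * ⟪G, y - x⟫_ℝ)) =
      L / 2 * ‖y - x‖ ^ 2 + ⟪G, y - x⟫_ℝ := by field_simp
  linarith [mul_nonpos_of_nonneg_of_nonpos (half_pos hL).le hnonpos]

end

theorem projected_gradient_sufficient_decrease_general {d : ℕ}
    (g : EuclideanSpace ℝ (Fin d) → ℝ) (l L : ℝ)
    (hdiff : Differentiable ℝ g)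
    (hlip : ∀ θ θ' : EuclideanSpace ℝ (Fin d),
      ‖gradient g θ - gradient g θ'‖ ≤ l * ‖θ - θ'‖)
    (hL : l < L)
    (Θ : Set (EuclideanSpace ℝ (Fin d)))
    (θm θm1 : EuclideanSpace ℝ (Fin d)) (hθm : θm ∈ Θ)
    (hmin : ∀ θ ∈ Θ, ‖θm1 - (θm - (1 / L) • gradient g θm)‖ ^ 2 ≤
      ‖θ - (θm - (1 / L) • gradient g θm)‖ ^ 2) :
    g θm - g θm1 ≥ (L - l) / 2 * ‖θm - θm1‖ ^ 2 := by
  rcases eq_or_ne θm1 θm with rfl | hne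
  · simp
  have hl : 0 ≤ l := nonneg_of_mul_nonneg_left ((norm_nonneg _).trans (hlip θm1 θm))
    (norm_pos_iff.2 (sub_ne_zero.2 hne))
  have hstep := inner_sub_le_of_norm_sub_gradient_step_le (hl.trans_lt hL) (hmin θm hθm)
  have hdescent := le_add_inner_gradient_add_sq_of_lipschitz_gradient hdiff hlip θm θm1
  rw [norm_sub_rev] at hstep hdescent
  linarith

/-- Sufficient decrease for one step of projected gradient descent with step `1/L`, `L > l`,
onto an arbitrary nonempty constraint set `Θ`. -/
theorem projected_gradient_sufficient_decrease {d : ℕ}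
    (g : EuclideanSpace ℝ (Fin d) → ℝ) (l L : ℝ)
    (hconv : ConvexOn ℝ Set.univ g)
    (hdiff : Differentiable ℝ g)
    (hlip : ∀ θ θ' : EuclideanSpace ℝ (Fin d),
      ‖gradient g θ - gradient g θ'‖ ≤ l * ‖θ - θ'‖)
    (hL : l < L)
    (Θ : Set (EuclideanSpace ℝ (Fin d))) (hΘ : Θ.Nonempty)
    (θm θm1 : EuclideanSpace ℝ (Fin d)) (hθm : θm ∈ Θ) (hθm1 : θm1 ∈ Θ)
    (hmin : ∀ θ ∈ Θ, ‖θm1 - (θm - (1 / L) • gradient g θm)‖ ^ 2 ≤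
      ‖θ - (θm - (1 / L) • gradient g θm)‖ ^ 2) :
    g θm - g θm1 ≥ (L - l) / 2 * ‖θm - θm1‖ ^ 2 :=
  projected_gradient_sufficient_decrease_general g l L hdiff hlip hL Θ θm θm1 hθm hmin
end

section
/- Let g : ℝ^d → ℝ be convex and differentiable with l-Lipschitz gradient and bounded below by a constant C₂. Let L > l, let Θ ⊆ ℝ^d be a nonempty closed set, and let (θ_m) be a sequence in Θ satisfying θ_{m+1} ∈ argmin_{θ ∈ Θ} ‖θ - (θ_m - (1/L)∇g(θ_m))‖₂². Then ‖θ_{m+1} - θ_m‖₂ → 0 as m → ∞. -/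
/-!
A projected gradient step with step `1/L` is at least as close to the gradient point as the
current iterate is, which gives `⟪∇g θₘ, θₘ₊₁ - θₘ⟫ ≤ -(L/2)‖θₘ₊₁ - θₘ‖²`. Combined with the
descent lemma for an `l`-smooth `g`, this yields the sufficient decrease
`(L - l)/2 · ‖θₘ₊₁ - θₘ‖² ≤ g θₘ - g θₘ₊₁`. The values `g θₘ` therefore decrease and are bounded
below, so they converge and their successive differences, hence the steps, tend to zero.
-/

open Filter Topology

lemma nonneg_of_norm_sub_le_mul_norm_sub {E F : Type*} [NormedAddCommGroup E] [Nontrivial E]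
    [SeminormedAddCommGroup F] {f : E → F} {l : ℝ}
    (h : ∀ x y, ‖f x - f y‖ ≤ l * ‖x - y‖) : 0 ≤ l := by
  obtain ⟨x, hx⟩ := exists_ne (0 : E)
  have := (norm_nonneg _).trans (h x 0)
  rw [sub_zero] at this
  exact nonneg_of_mul_nonneg_left this (norm_pos_iff.2 hx)

section Descent

variable {E : Type*} [NormedAddCommGroup E] [InnerProductSpace ℝ E]

lemma hasDerivAt_comp_add_smul [CompleteSpace E] {g : E → ℝ} (hg : Differentiable ℝ g)
    (x v : E) (t : ℝ) :
    HasDerivAt (fun s : ℝ => g (x + s • v)) (inner ℝ (gradient g (x + t • v)) v) t := by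
  have hline : HasDerivAt (fun s : ℝ => x + s • v) v t := by
    simpa using ((hasDerivAt_id t).smul_const v).const_add x
  exact (hg _).hasGradientAt.hasFDerivAt.comp_hasDerivAt t hline

theorem le_add_inner_gradient_add_mul_norm_sq [CompleteSpace E] {g : E → ℝ} {l : ℝ}
    (hg : Differentiable ℝ g) (hlip : ∀ x y, ‖gradient g x - gradient g y‖ ≤ l * ‖x - y‖)
    (x y : E) :
    g y ≤ g x + inner ℝ (gradient g x) (y - x) + l / 2 * ‖y - x‖ ^ 2 := by
  set v := y - x
  -- `φ' ≤ 0` on `[0, ∞)` by the Lipschitz bound on the gradient, so `φ 1 ≤ φ 0`.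
  let φ : ℝ → ℝ := fun t =>
    g (x + t • v) - t * inner ℝ (gradient g x) v - l / 2 * ‖v‖ ^ 2 * t ^ 2
  let φ' : ℝ → ℝ := fun t =>
    inner ℝ (gradient g (x + t • v) - gradient g x) v - l * ‖v‖ ^ 2 * t
  have hφ : ∀ t, HasDerivAt φ (φ' t) t := fun t => by
    have hlin : HasDerivAt (fun s : ℝ => s * inner ℝ (gradient g x) v)
        (inner ℝ (gradient g x) v) t := by
      simpa using (hasDerivAt_id t).mul_const (inner ℝ (gradient g x) v)
    have hquad : HasDerivAt (fun s : ℝ => l / 2 * ‖v‖ ^ 2 * s ^ 2) (l * ‖v‖ ^ 2 * t) t := by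
      refine ((hasDerivAt_pow 2 t).const_mul (l / 2 * ‖v‖ ^ 2)).congr_deriv ?_
      norm_num
      ring
    refine (((hasDerivAt_comp_add_smul hg x v t).sub hlin).sub hquad).congr_deriv ?_
    simp only [φ', inner_sub_left]
  have hφ'_nonpos : ∀ t, 0 ≤ t → φ' t ≤ 0 := fun t ht => sub_nonpos.2 <| by
    have : ‖x + t • v - x‖ = t * ‖v‖ := by
      rw [add_sub_cancel_left, norm_smul, Real.norm_of_nonneg ht]
    calc inner ℝ (gradient g (x + t • v) - gradient g x) v
        ≤ ‖gradient g (x + t • v) - gradient g x‖ * ‖v‖ := real_inner_le_norm _ _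
      _ ≤ l * ‖x + t • v - x‖ * ‖v‖ := by gcongr; exact hlip _ _
      _ = l * ‖v‖ ^ 2 * t := by rw [this]; ring
  have hanti : AntitoneOn φ (Set.Ici 0) :=
    antitoneOn_of_hasDerivWithinAt_nonpos (convex_Ici 0)
      (fun t _ => (hφ t).continuousAt.continuousWithinAt)
      (fun t _ => (hφ t).hasDerivWithinAt)
      (fun t ht => hφ'_nonpos t (interior_subset ht))
  have := hanti Set.self_mem_Ici (Set.mem_Ici.2 zero_le_one) zero_le_one
  simp only [φ, v, one_smul, zero_smul, add_zero, add_sub_cancel] at this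
  linarith

lemma inner_le_neg_half_mul_norm_sq_of_projection {L : ℝ} (hL : 0 < L) {x y G : E}
    (h : ‖y - (x - (1 / L) • G)‖ ^ 2 ≤ ‖x - (x - (1 / L) • G)‖ ^ 2) :
    inner ℝ G (y - x) ≤ -(L / 2) * ‖y - x‖ ^ 2 := by
  rw [show y - (x - (1 / L) • G) = (y - x) + (1 / L) • G by abel, sub_sub_cancel,
    norm_add_sq_real, real_inner_smul_right, real_inner_comm] at h
  have : L * ‖y - x‖ ^ 2 + 2 * inner ℝ G (y - x) ≤ 0 := by
    have := mul_le_mul_of_nonneg_left h hL.le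
    field_simp at this
    linarith
  linarith

theorem sub_div_two_mul_norm_sq_le_of_projected_gradient_step [CompleteSpace E] {g : E → ℝ}
    {l L : ℝ} (hg : Differentiable ℝ g)
    (hlip : ∀ x y, ‖gradient g x - gradient g y‖ ≤ l * ‖x - y‖) (hL : 0 < L) {x y : E}
    (hstep : ‖y - (x - (1 / L) • gradient g x)‖ ^ 2 ≤ ‖x - (x - (1 / L) • gradient g x)‖ ^ 2) :
    (L - l) / 2 * ‖y - x‖ ^ 2 ≤ g x - g y := by
  have hdescent := le_add_inner_gradient_add_mul_norm_sq hg hlip x y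
  have hproj := inner_le_neg_half_mul_norm_sq_of_projection hL hstep
  linarith

end Descent

theorem tendsto_zero_of_mul_sq_le_sub_succ {a b : ℕ → ℝ} {c C : ℝ} (hc : 0 < c)
    (hb : ∀ m, 0 ≤ b m) (ha : ∀ m, C ≤ a m) (hdec : ∀ m, c * b m ^ 2 ≤ a m - a (m + 1)) :
    Tendsto b atTop (𝓝 0) := by
  have hanti : Antitone a := antitone_nat_of_succ_le fun m => by
    nlinarith [hdec m, sq_nonneg (b m)]
  have hlim := tendsto_atTop_ciInf hanti ⟨C, by rintro _ ⟨m, rfl⟩; exact ha m⟩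
  have hgap : Tendsto (fun m => (a m - a (m + 1)) / c) atTop (𝓝 0) := by
    simpa using (hlim.sub (hlim.comp (tendsto_add_atTop_nat 1))).div_const c
  have hsq : Tendsto (fun m => b m ^ 2) atTop (𝓝 0) :=
    squeeze_zero (fun m => sq_nonneg _) (fun m => (le_div_iff₀' hc).2 (hdec m)) hgap
  simpa [Real.sqrt_sq (hb _)] using hsq.sqrt

theorem projected_gradient_successive_diff_tendsto_zero_general {d : ℕ}
    (g : EuclideanSpace ℝ (Fin d) → ℝ) (l L C₂ : ℝ)
    (hdiff : Differentiable ℝ g)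
    (hlip : ∀ θ θ' : EuclideanSpace ℝ (Fin d),
      ‖gradient g θ - gradient g θ'‖ ≤ l * ‖θ - θ'‖)
    (hbdd : ∀ θ, C₂ ≤ g θ)
    (hL : l < L)
    (Θ : Set (EuclideanSpace ℝ (Fin d)))
    (θ : ℕ → EuclideanSpace ℝ (Fin d))
    (hmem : ∀ m, θ m ∈ Θ)
    (hmin : ∀ m, ∀ θ' ∈ Θ, ‖θ (m + 1) - (θ m - (1 / L) • gradient g (θ m))‖ ^ 2 ≤
      ‖θ' - (θ m - (1 / L) • gradient g (θ m))‖ ^ 2) :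
    Filter.Tendsto (fun m => ‖θ (m + 1) - θ m‖) Filter.atTop (nhds 0) := by
  cases subsingleton_or_nontrivial (EuclideanSpace ℝ (Fin d))
  · have hconst : ∀ m, θ (m + 1) = θ m := fun m => Subsingleton.elim _ _
    simp [hconst]
  have hL₀ : 0 < L := (nonneg_of_norm_sub_le_mul_norm_sub hlip).trans_lt hL
  have hc : 0 < (L - l) / 2 := by linarith
  exact tendsto_zero_of_mul_sq_le_sub_succ (a := fun m => g (θ m)) hc (fun m => norm_nonneg _)
    (fun m => hbdd _) fun m =>
      sub_div_two_mul_norm_sq_le_of_projected_gradient_step hdiff hlip hL₀ (hmin m (θ m) (hmem m))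

/-- Successive projected gradient iterates get arbitrarily close:
`‖θ_{m+1} - θ_m‖ → 0` when `g` is convex, differentiable, has `l`-Lipschitz gradient,
is bounded below, and the step size is `1/L` with `L > l`. -/
theorem projected_gradient_successive_diff_tendsto_zero {d : ℕ}
    (g : EuclideanSpace ℝ (Fin d) → ℝ) (l L C₂ : ℝ)
    (hconv : ConvexOn ℝ Set.univ g)
    (hdiff : Differentiable ℝ g)
    (hlip : ∀ θ θ' : EuclideanSpace ℝ (Fin d),
      ‖gradient g θ - gradient g θ'‖ ≤ l * ‖θ - θ'‖)
    (hbdd : ∀ θ, C₂ ≤ g θ)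
    (hL : l < L)
    (Θ : Set (EuclideanSpace ℝ (Fin d))) (hΘ : Θ.Nonempty) (hΘclosed : IsClosed Θ)
    (θ : ℕ → EuclideanSpace ℝ (Fin d))
    (hmem : ∀ m, θ m ∈ Θ)
    (hmin : ∀ m, ∀ θ' ∈ Θ, ‖θ (m + 1) - (θ m - (1 / L) • gradient g (θ m))‖ ^ 2 ≤
      ‖θ' - (θ m - (1 / L) • gradient g (θ m))‖ ^ 2) :
    Filter.Tendsto (fun m => ‖θ (m + 1) - θ m‖) Filter.atTop (nhds 0) :=
  projected_gradient_successive_diff_tendsto_zero_general g l L C₂ hdiff hlip hbdd hL Θ θ hmem hmin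
end

section
/- Fix reals γ₁* ≠ γ₂* with |γ₁* - γ₂*| ≥ 1, integers s₀ ≥ 2, and a partition of {1,…,s₀} into nonempty sets G₁*, G₂* with |G₁*| = k₁*, |G₂*| = k₂* = s₀ - k₁*, where k₁* = c₁* s₀ for some constant 0 < c₁* < 1. Let β* ∈ ℝ^{s₀} take value γ₁* on G₁* and γ₂* on G₂*. Let G₁ ⊊ G₁* with |G₁| = k₁ < k₁*, and G₂ = {1,…,s₀} \ G₁. Then the minimum over all β ∈ ℝ^{s₀} constant on G₁ and constant on G₂ of ‖β - β*‖₂² equals (k₁* - k₁)(s₀ - k₁*)(γ₁* - γ₂*)² / (s₀ - k₁), and consequently this minimum divided by (k₁* - k₁) is at least (1 - c₁*). -/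
open Finset

/-- Case (i) of the grouping-sensitivity computation for two groups: if `G₁ ⊊ G₁*`, the
minimum of `‖β - β*‖₂²` over `β` constant on `G₁` and on its complement equals
`(k₁* - k₁)(s₀ - k₁*)(γ₁* - γ₂*)²/(s₀ - k₁)`, and dividing by the mismatch count
`k₁* - k₁` gives at least `1 - c₁*`. -/
theorem grouping_sensitivity_case_one (s₀ : ℕ) (hs₀ : 2 ≤ s₀)
    (γ₁ γ₂ : ℝ) (hγ : γ₁ ≠ γ₂) (hsep : 1 ≤ |γ₁ - γ₂|)
    (G₁star : Finset (Fin s₀)) (hG₁ne : G₁star.Nonempty) (hG₂ne : G₁starᶜ.Nonempty)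
    (c₁star : ℝ) (hc0 : 0 < c₁star) (hc1 : c₁star < 1)
    (hcard : (G₁star.card : ℝ) = c₁star * s₀)
    (βstar : Fin s₀ → ℝ) (hβstar : βstar = fun j => if j ∈ G₁star then γ₁ else γ₂)
    (G₁ : Finset (Fin s₀)) (hsub : G₁ ⊂ G₁star) :
    IsLeast
      {y : ℝ | ∃ a b : ℝ, y = ∑ j, ((if j ∈ G₁ then a else b) - βstar j) ^ 2}
      (((G₁star.card : ℝ) - G₁.card) * ((s₀ : ℝ) - G₁star.card) * (γ₁ - γ₂) ^ 2 /
        ((s₀ : ℝ) - G₁.card)) ∧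
    (1 - c₁star) ≤
      ((G₁star.card : ℝ) - G₁.card) * ((s₀ : ℝ) - G₁star.card) * (γ₁ - γ₂) ^ 2 /
        ((s₀ : ℝ) - G₁.card) / ((G₁star.card : ℝ) - G₁.card) := by
  subst hβstar
  set k₁ : ℝ := (G₁.card : ℝ) with hk₁
  set k : ℝ := (G₁star.card : ℝ) with hk
  have hsubset : G₁ ⊆ G₁star := hsub.subset
  have hcardlt : G₁.card < G₁star.card := Finset.card_lt_card hsub
  have hm : 0 < k - k₁ := by
    have : (G₁.card : ℝ) < (G₁star.card : ℝ) := by exact_mod_cast hcardlt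
    linarith
  have hcards : G₁star.card < s₀ := by
    have h := Finset.card_pos.mpr hG₂ne
    rw [Finset.card_compl] at h
    simp only [Fintype.card_fin] at h
    omega
  have hn : 0 < (s₀ : ℝ) - k := by
    have : (G₁star.card : ℝ) < (s₀ : ℝ) := by exact_mod_cast hcards
    linarith
  have hk₁0 : 0 ≤ k₁ := Nat.cast_nonneg _
  have hden : 0 < (s₀ : ℝ) - k₁ := by linarith
  -- the key sum decomposition
  have hsum : ∀ a b : ℝ,
      ∑ j, ((if j ∈ G₁ then a else b) - (if j ∈ G₁star then γ₁ else γ₂)) ^ 2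
      = k₁ * (a - γ₁) ^ 2 + (k - k₁) * (b - γ₁) ^ 2 + ((s₀ : ℝ) - k) * (b - γ₂) ^ 2 := by
    intro a b
    rw [← Finset.sum_add_sum_compl G₁star]
    have h1 : ∑ j ∈ G₁star, ((if j ∈ G₁ then a else b) - (if j ∈ G₁star then γ₁ else γ₂)) ^ 2
        = k₁ * (a - γ₁) ^ 2 + (k - k₁) * (b - γ₁) ^ 2 := by
      rw [← Finset.sum_sdiff hsubset]
      have e1 : ∑ j ∈ G₁star \ G₁,
          ((if j ∈ G₁ then a else b) - (if j ∈ G₁star then γ₁ else γ₂)) ^ 2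
          = (G₁star \ G₁).card • (b - γ₁) ^ 2 := by
        rw [Finset.sum_congr rfl fun j hj => ?_, Finset.sum_const]
        rw [Finset.mem_sdiff] at hj
        rw [if_neg hj.2, if_pos hj.1]
      have e2 : ∑ j ∈ G₁,
          ((if j ∈ G₁ then a else b) - (if j ∈ G₁star then γ₁ else γ₂)) ^ 2
          = G₁.card • (a - γ₁) ^ 2 := by
        rw [Finset.sum_congr rfl fun j hj => ?_, Finset.sum_const]
        rw [if_pos hj, if_pos (hsubset hj)]
      rw [e1, e2, Finset.card_sdiff_of_subset hsubset]
      simp only [nsmul_eq_mul, Nat.cast_sub hcardlt.le]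
      ring
    have h2 : ∑ j ∈ G₁starᶜ,
        ((if j ∈ G₁ then a else b) - (if j ∈ G₁star then γ₁ else γ₂)) ^ 2
        = ((s₀ : ℝ) - k) * (b - γ₂) ^ 2 := by
      rw [Finset.sum_congr rfl fun j hj => ?_, Finset.sum_const]
      · rw [Finset.card_compl, Fintype.card_fin, nsmul_eq_mul,
          Nat.cast_sub (le_of_lt hcards)]
      · rw [Finset.mem_compl] at hj
        rw [if_neg (fun h => hj (hsubset h)), if_neg hj]
    rw [h1, h2]
  constructor
  · constructor
    · refine ⟨γ₁, ((k - k₁) * γ₁ + ((s₀ : ℝ) - k) * γ₂) / ((s₀ : ℝ) - k₁), ?_⟩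
      rw [hsum]
      field_simp
      ring
    · rintro y ⟨a, b, rfl⟩
      rw [hsum]
      rw [div_le_iff₀ hden]
      nlinarith [sq_nonneg ((k - k₁) * (b - γ₁) + ((s₀ : ℝ) - k) * (b - γ₂)),
        sq_nonneg (a - γ₁), mul_nonneg hk₁0 (sq_nonneg (a - γ₁))]
  · have hq : 1 ≤ (γ₁ - γ₂) ^ 2 := by
      nlinarith [sq_abs (γ₁ - γ₂)]
    have hs : (0:ℝ) < s₀ := by positivity
    have heq : (k - k₁) * ((s₀ : ℝ) - k) * (γ₁ - γ₂) ^ 2 / ((s₀ : ℝ) - k₁) / (k - k₁)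
        = ((s₀ : ℝ) - k) * (γ₁ - γ₂) ^ 2 / ((s₀ : ℝ) - k₁) := by
      field_simp
    rw [heq, le_div_iff₀ hden]
    have hkval : (s₀ : ℝ) - k = (1 - c₁star) * s₀ := by
      rw [hcard]; ring
    nlinarith [mul_le_mul_of_nonneg_left hk₁0 (le_of_lt (by linarith : (0:ℝ) < 1 - c₁star)),
      mul_le_mul_of_nonneg_left hq (le_of_lt (mul_pos (by linarith : (0:ℝ) < 1 - c₁star) hs))]
end
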